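/- Let V be a finite-dimensional vector space over a field, U a subspace, and W_1, ..., W_n one-dimensional subspaces. If every linear functional on the span of U and the W_j's that vanishes on U also vanishes on some W_j, and the base field has more than n elements, then some W_j is contained in U. -/

import Mathlib

/-!
Suppose no `W j` lies in `U` and pick `w j ∈ W j \ U`. Their images in `B ⧸ U` are nonzero, and
for each of them the functionals on `B ⧸ U` vanishing there form a proper subspace of the dual.
A vector space over a field with more than `n` elements is not a union of `n` proper subspaces,
so some functional on `B ⧸ U` is nonzero at every `w j`; pulled back to `B`, it contradicts the
hypothesis.
-/

open Module

section

variable {ι K M : Type*} [Fintype ι] [Field K] [AddCommGroup M] [Module K M]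

lemma Module.exists_dual_forall_apply_ne_zero_of_card_lt (v : ι → M) (hv : ∀ i, v i ≠ 0)
    (hK : Fintype.card ι < ENat.card K) :
    ∃ f : Dual K M, ∀ i, f (v i) ≠ 0 := by
  have hker (i : ι) : LinearMap.ker (Dual.eval K M (v i)) ≠ ⊤ := by
    rw [Ne, LinearMap.ker_eq_top, eval_apply_eq_zero_iff]
    exact hv i
  obtain ⟨f, -, hf⟩ := Set.exists_of_ssubset <|
    Submodule.iUnion_ssubset_of_forall_ne_top_of_card_lt Finset.univ _ hker (by simpa using hK)
  exact ⟨f, by simpa using hf⟩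

lemma Submodule.exists_dual_forall_mem_eq_zero_and_apply_ne_zero_of_card_lt (p : Submodule K M)
    (v : ι → M) (hv : ∀ i, v i ∉ p) (hK : Fintype.card ι < ENat.card K) :
    ∃ f : Dual K M, (∀ x ∈ p, f x = 0) ∧ ∀ i, f (v i) ≠ 0 := by
  obtain ⟨g, hg⟩ := exists_dual_forall_apply_ne_zero_of_card_lt (p.mkQ ∘ v)
    (fun i ↦ by simpa [Submodule.Quotient.mk_eq_zero] using hv i) hK
  exact ⟨g ∘ₗ p.mkQ, fun x hx ↦ by simp [(Submodule.Quotient.mk_eq_zero p).mpr hx], hg⟩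

end

theorem stmt_2_general (F : Type*) [Field F] (n : ℕ) (hF : (n : Cardinal) < Cardinal.mk F)
    (V : Type*) [AddCommGroup V] [Module F V]
    (U : Submodule F V) (W : Fin n → Submodule F V)
    (h : ∀ φ : ↥(U ⊔ ⨆ j, W j) →ₗ[F] F,
      (∀ x : ↥(U ⊔ ⨆ j, W j), (x : V) ∈ U → φ x = 0) →
      ∃ j, ∀ x : ↥(U ⊔ ⨆ j, W j), (x : V) ∈ W j → φ x = 0) :
    ∃ j, W j ≤ U := by
  by_contra! hWU
  choose w hwW hwU using fun j ↦ SetLike.not_le_iff_exists.mp (hWU j)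
  have hWB : ∀ j, W j ≤ U ⊔ ⨆ j, W j := fun j ↦ (le_iSup W j).trans le_sup_right
  obtain ⟨φ, hφU, hφw⟩ := Submodule.exists_dual_forall_mem_eq_zero_and_apply_ne_zero_of_card_lt
    (U.comap (U ⊔ ⨆ j, W j).subtype) (fun j ↦ ⟨w j, hWB j (hwW j)⟩) hwU
    (by simpa [ENat.card] using hF)
  obtain ⟨j, hj⟩ := h φ hφU
  exact hφw j (hj _ (hwW j))

theorem stmt_2 (F : Type*) [Field F] (n : ℕ) (hF : (n : Cardinal) < Cardinal.mk F)
    (V : Type*) [AddCommGroup V] [Module F V] [FiniteDimensional F V]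
    (U : Submodule F V) (W : Fin n → Submodule F V)
    (hW : ∀ j, Module.finrank F (W j) = 1)
    (h : ∀ φ : ↥(U ⊔ ⨆ j, W j) →ₗ[F] F,
      (∀ x : ↥(U ⊔ ⨆ j, W j), (x : V) ∈ U → φ x = 0) →
      ∃ j, ∀ x : ↥(U ⊔ ⨆ j, W j), (x : V) ∈ W j → φ x = 0) :
    ∃ j, W j ≤ U :=
  stmt_2_general F n hF V U W h
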